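/- Let μ_φ be the Gibbs measure of a Lipschitz potential φ with pressure 0. There exists a constant λ₂ > 0 (depending only on φ) such that for every n ∈ ℕ, every word a_0^{n−1} ∈ A^n and every v with 0 < v ≤ 1/2, one has μ_φ{y : τ_{[a_0^{n−1}]}(y) · μ_φ([a_0^{n−1}]) < v} ≤ 1 − e^{−λ₂ v} ≤ λ₂ v. -/

import Mathlib

/-! By shift invariance each event `σ^j y ∈ [w]` has measure `μ [w]`, so a union bound over the
times `1 ≤ j < v / μ [w]` gives `μ {τ_[w] · μ [w] < v} ≤ v`. The Gibbs property makes `μ [w]`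
positive, and convexity of `exp` gives `v ≤ 1 - e^{-v log 4}` for `0 ≤ v ≤ 1/2`. -/

open MeasureTheory Finset
open scoped ENNReal

namespace GibbsEntropy

variable {A : Type*} [Fintype A] [DecidableEq A]

/-- The left shift `σ` on one-sided sequences `Ω = A^ℕ`. -/
def shift (x : ℕ → A) : ℕ → A := fun i => x (i + 1)

/-- The cylinder set `[w]` determined by a word `w = a_0 … a_{k-1}`. -/
def cylinder {k : ℕ} (w : Fin k → A) : Set (ℕ → A) := {x | ∀ i : Fin k, x i.val = w i}

/-- The metric `d_θ(x,y) = θ^N`, `N` the first disagreement index. -/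
noncomputable def dTheta (θ : ℝ) (x y : ℕ → A) : ℝ :=
  letI : Decidable (x = y) := Classical.dec _
  if h : x = y then 0
  else θ ^ (Nat.find (p := fun n => x n ≠ y n)
    (by by_contra hc; push_neg at hc; exact h (funext fun i => hc i)))

/-- `f` is Lipschitz w.r.t. `d_θ`, i.e. `var_m(f) ≤ C θ^m` for all `m`
(`var_m` being the oscillation over pairs agreeing on coordinates `0,…,m`). -/
def LipFun (θ : ℝ) (f : (ℕ → A) → ℝ) : Prop :=
  ∃ C : ℝ, 0 ≤ C ∧ ∀ (m : ℕ) (x y : ℕ → A), (∀ i ≤ m, x i = y i) → |f x - f y| ≤ C * θ ^ m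

/-- `|f|_θ`, the least Lipschitz constant of `f` w.r.t. `d_θ`. -/
noncomputable def lipNorm (θ : ℝ) (f : (ℕ → A) → ℝ) : ℝ :=
  sInf {C : ℝ | 0 ≤ C ∧ ∀ (m : ℕ) (x y : ℕ → A), (∀ i ≤ m, x i = y i) → |f x - f y| ≤ C * θ ^ m}

/-- A separately Lipschitz function of `n` variables in `Ω^n`. -/
def SepLip (θ : ℝ) {n : ℕ} (K : (Fin n → (ℕ → A)) → ℝ) : Prop :=
  ∀ j : Fin n, ∃ C : ℝ, 0 ≤ C ∧ ∀ (x : Fin n → (ℕ → A)) (y : ℕ → A),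
    |K x - K (Function.update x j y)| ≤ C * dTheta θ (x j) y

/-- `Lip_j(K)`, the least Lipschitz constant of `K` in its `j`-th variable. -/
noncomputable def lipCoord (θ : ℝ) {n : ℕ} (K : (Fin n → (ℕ → A)) → ℝ) (j : Fin n) : ℝ :=
  sInf {C : ℝ | 0 ≤ C ∧ ∀ (x : Fin n → (ℕ → A)) (y : ℕ → A),
    |K x - K (Function.update x j y)| ≤ C * dTheta θ (x j) y}

/-- The trajectory `(x, σx, …, σ^{n-1}x)`. -/
def traj (n : ℕ) (x : ℕ → A) : Fin n → (ℕ → A) := fun i => shift^[i.val] x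

/-- The Gibbs property (with topological pressure `0`) of `μ` for the potential `φ`:
`C⁻¹ ≤ μ([x_0^{m-1}]) / exp(∑_{k<m} φ(σ^k x)) ≤ C`. -/
def IsGibbs [MeasurableSpace A] (φ : (ℕ → A) → ℝ) (μ : Measure (ℕ → A)) : Prop :=
  ∃ C : ℝ, 1 < C ∧ ∀ (x : ℕ → A) (m : ℕ), 1 ≤ m →
    C⁻¹ * Real.exp (∑ i ∈ Finset.range m, φ (shift^[i] x)) ≤
        (μ (cylinder (fun i : Fin m => x i.val))).toReal ∧
    (μ (cylinder (fun i : Fin m => x i.val))).toReal ≤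
        C * Real.exp (∑ i ∈ Finset.range m, φ (shift^[i] x))

/-- Empirical frequency `E_k(w; x_0^{n-1})` of the word `w` in the `n`-periodization of `x`. -/
noncomputable def empFreq (n k : ℕ) (x : ℕ → A) (w : Fin k → A) : ℝ :=
  ((Finset.range n).filter (fun j => ∀ i : Fin k, x ((j + i.val) % n) = w i)).card / n

/-- `k`-block entropy `H_k(η)` of a probability vector `η` on `A^k` (`0 log 0 = 0`). -/
noncomputable def blockEnt (k : ℕ) (η : (Fin k → A) → ℝ) : ℝ :=
  -∑ w : Fin k → A, η w * Real.log (η w)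

/-- The `k`-block empirical entropy `Ĥ_k(x_0^{n-1})`. -/
noncomputable def empEnt (n k : ℕ) (x : ℕ → A) : ℝ := blockEnt k (empFreq n k x)

/-- The `k`-block conditional empirical entropy `ĥ_k = Ĥ_k - Ĥ_{k-1}`. -/
noncomputable def condEmpEnt (n k : ℕ) (x : ℕ → A) : ℝ := empEnt n k x - empEnt n (k - 1) x

/-- `k`-block relative entropy `H_k(η | ρ) = ∑ η log(η/ρ)` (conventions `0 log 0 = 0`,
`0 log (0/c) = 0`). -/
noncomputable def relEnt (k : ℕ) (η ρ : (Fin k → A) → ℝ) : ℝ :=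
  ∑ w : Fin k → A, η w * Real.log (η w / ρ w)

/-- `μ([w])` as a real number. -/
noncomputable def muWord [MeasurableSpace A] (μ : Measure (ℕ → A)) (k : ℕ) (w : Fin k → A) : ℝ :=
  (μ (cylinder w)).toReal

/-- `Δ̂_k(x_0^{n-1}) = -H_k(E_k(·;x_0^{n-1})|μ) + H_{k-1}(E_{k-1}(·;x_0^{n-1})|μ)`. -/
noncomputable def deltaHat [MeasurableSpace A] (μ : Measure (ℕ → A)) (n k : ℕ) (x : ℕ → A) : ℝ :=
  -relEnt k (empFreq n k x) (muWord μ k) +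
    relEnt (k - 1) (empFreq n (k - 1) x) (muWord μ (k - 1))

/-- Hitting time `W_n(x,y) = inf{j ≥ 1 : y_j^{j+n-1} = x_0^{n-1}}` (in `ℝ≥0∞`, `= ∞`
if there is no such `j`). -/
noncomputable def hitTime (n : ℕ) (x y : ℕ → A) : ℝ≥0∞ :=
  ⨅ (j : ℕ) (_ : 1 ≤ j ∧ ∀ i : Fin n, y (j + i.val) = x i.val), (j : ℝ≥0∞)

/-- Hitting time `τ_{[w]}(y) = inf{j ≥ 1 : y_j^{j+n-1} = w}` of the cylinder of a word `w`. -/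
noncomputable def wordHitTime {n : ℕ} (w : Fin n → A) (y : ℕ → A) : ℝ≥0∞ :=
  ⨅ (j : ℕ) (_ : 1 ≤ j ∧ ∀ i : Fin n, y (j + i.val) = w i), (j : ℝ≥0∞)

/-- The tail word `a_1^{k-1}` of a word `a_0^{k-1}`. -/
def wordTail {k : ℕ} (w : Fin k → A) : Fin (k - 1) → A := fun i => w ⟨i.val + 1, by omega⟩

end GibbsEntropy


theorem le_one_sub_exp_neg_log_four_mul {v : ℝ} (hv₀ : 0 ≤ v) (hv : v ≤ 1 / 2) :
    v ≤ 1 - Real.exp (-Real.log 4 * v) := by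
  have hconv := convexOn_exp.2 (Set.mem_univ 0) (Set.mem_univ (-Real.log 2))
    (by linarith : 0 ≤ 1 - 2 * v) (by linarith : 0 ≤ 2 * v) (by ring)
  have hlog : -Real.log 4 * v = (1 - 2 * v) • 0 + (2 * v) • -Real.log 2 := by
    rw [show (4 : ℝ) = 2 ^ 2 by norm_num, Real.log_pow]; simp only [smul_eq_mul]; push_cast; ring
  rw [hlog]
  simp only [smul_eq_mul, Real.exp_zero, Real.exp_neg, Real.exp_log two_pos] at hconv ⊢
  linarith

theorem natCast_ceil_sub_one_le_ofReal (s : ℝ) :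
    ((⌈s⌉₊ - 1 : ℕ) : ℝ≥0∞) ≤ ENNReal.ofReal s := by
  rcases Nat.eq_zero_or_pos ⌈s⌉₊ with h | h
  · simp [h]
  · have hs : 0 ≤ s := (Nat.ceil_pos.1 h).le
    rw [← ENNReal.ofReal_natCast, Nat.cast_sub h, Nat.cast_one]
    exact ENNReal.ofReal_le_ofReal (by linarith [Nat.ceil_lt_add_one hs])

namespace GibbsEntropy

variable {A : Type*}

theorem shift_iterate_apply (j : ℕ) (y : ℕ → A) (i : ℕ) : shift^[j] y i = y (i + j) := by
  induction j generalizing y with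
  | zero => rfl
  | succ k ih => rw [Function.iterate_succ_apply, ih]; simp only [shift]; ring_nf

theorem wordHitTime_lt_iff {n : ℕ} (w : Fin n → A) (y : ℕ → A) (t : ℝ≥0∞) :
    wordHitTime w y < t ↔ ∃ j, (1 ≤ j ∧ shift^[j] y ∈ cylinder w) ∧ (j : ℝ≥0∞) < t := by
  simp only [wordHitTime, iInf_lt_iff, cylinder, Set.mem_ofPred_eq, shift_iterate_apply,
    Nat.add_comm _ (Fin.val _), exists_prop]

variable [MeasurableSpace A] {μ : Measure (ℕ → A)}

theorem measure_wordHitTime_lt_le (hσ : MeasurePreserving shift μ μ) {n : ℕ} (w : Fin n → A)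
    (s : ℝ) :
    μ {y | wordHitTime w y < ENNReal.ofReal s} ≤ ENNReal.ofReal s * μ (cylinder w) := by
  have hsub : {y | wordHitTime w y < ENNReal.ofReal s} ⊆
      ⋃ j ∈ Finset.Ico 1 ⌈s⌉₊, shift^[j] ⁻¹' cylinder w := by
    intro y hy
    obtain ⟨j, ⟨hj1, hjy⟩, hjs⟩ := (wordHitTime_lt_iff w y _).1 hy
    have hj : j < ⌈s⌉₊ := Nat.lt_ceil.2 <| by exact_mod_cast (ENNReal.natCast_lt_ofReal.1 hjs)
    exact Set.mem_biUnion (Finset.mem_Ico.2 ⟨hj1, hj⟩) hjy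
  calc μ {y | wordHitTime w y < ENNReal.ofReal s}
      ≤ ∑ j ∈ Finset.Ico 1 ⌈s⌉₊, μ (shift^[j] ⁻¹' cylinder w) :=
        (measure_mono hsub).trans (measure_biUnion_finset_le _ _)
    _ ≤ ∑ _j ∈ Finset.Ico 1 ⌈s⌉₊, μ (cylinder w) :=
        Finset.sum_le_sum fun j _ => (hσ.iterate j).measure_preimage_le _
    _ = ((⌈s⌉₊ - 1 : ℕ) : ℝ≥0∞) * μ (cylinder w) := by
        rw [Finset.sum_const, Nat.card_Ico, nsmul_eq_mul]
    _ ≤ ENNReal.ofReal s * μ (cylinder w) := by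
        gcongr
        exact natCast_ceil_sub_one_le_ofReal s

theorem measure_wordHitTime_mul_lt_le (hσ : MeasurePreserving shift μ μ) {n : ℕ}
    (w : Fin n → A) (hw₀ : μ (cylinder w) ≠ 0) (hw : μ (cylinder w) ≠ ∞) (v : ℝ) :
    μ {y | wordHitTime w y * μ (cylinder w) < ENNReal.ofReal v} ≤ ENNReal.ofReal v := by
  set p := μ (cylinder w)
  have hp : p = ENNReal.ofReal p.toReal := (ENNReal.ofReal_toReal hw).symm
  calc μ {y | wordHitTime w y * p < ENNReal.ofReal v}
      = μ {y | wordHitTime w y < ENNReal.ofReal (v / p.toReal)} := by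
        rw [ENNReal.ofReal_div_of_pos (ENNReal.toReal_pos hw₀ hw), ← hp]
        simp only [ENNReal.lt_div_iff_mul_lt (Or.inl hw₀) (Or.inl hw)]
    _ ≤ ENNReal.ofReal (v / p.toReal) * p := measure_wordHitTime_lt_le hσ w _
    _ = ENNReal.ofReal v := by
        rw [ENNReal.ofReal_div_of_pos (ENNReal.toReal_pos hw₀ hw), ← hp,
          ENNReal.div_mul_cancel hw₀ hw]

theorem IsGibbs.measure_cylinder_pos [NeZero μ] {φ : (ℕ → A) → ℝ} (hμ : IsGibbs φ μ) {n : ℕ}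
    (w : Fin n → A) : 0 < μ (cylinder w) := by
  rcases Nat.eq_zero_or_pos n with rfl | hn
  · rw [show cylinder w = Set.univ from Set.eq_univ_of_forall fun _ => finZeroElim]
    exact pos_of_ne_zero (NeZero.ne _)
  obtain ⟨C, hC, hG⟩ := hμ
  classical
  let x : ℕ → A := fun i => if h : i < n then w ⟨i, h⟩ else w ⟨0, hn⟩
  have hx : (fun i : Fin n => x i) = w := funext fun i => dif_pos i.isLt
  have hpos : 0 < (μ (cylinder w)).toReal := by
    rw [← hx]
    exact lt_of_lt_of_le (by have := zero_lt_one.trans hC; positivity) (hG x n hn).1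
  exact ENNReal.toReal_pos_iff.1 hpos |>.1

end GibbsEntropy

open GibbsEntropy

theorem statement_17_general {A : Type*} [MeasurableSpace A]
    (φ : (ℕ → A) → ℝ)
    (μ : Measure (ℕ → A)) [IsProbabilityMeasure μ]
    (hσ : MeasurePreserving (shift (A := A)) μ μ)
    (hGibbs : IsGibbs φ μ) :
    ∃ lam₂ : ℝ, 0 < lam₂ ∧ ∀ (n : ℕ) (w : Fin n → A) (v : ℝ), 0 < v → v ≤ 1 / 2 →
      μ {y | wordHitTime w y * μ (cylinder w) < ENNReal.ofReal v} ≤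
          ENNReal.ofReal (1 - Real.exp (-lam₂ * v)) ∧
        1 - Real.exp (-lam₂ * v) ≤ lam₂ * v := by
  refine ⟨Real.log 4, Real.log_pos (by norm_num), fun n w v hv hv₂ => ⟨?_, ?_⟩⟩
  · have hw₀ := (hGibbs.measure_cylinder_pos w).ne'
    calc _ ≤ ENNReal.ofReal v :=
          measure_wordHitTime_mul_lt_le hσ w hw₀ (measure_ne_top μ _) v
      _ ≤ _ := ENNReal.ofReal_le_ofReal (le_one_sub_exp_neg_log_four_mul hv.le hv₂)
  · linarith [Real.add_one_le_exp (-Real.log 4 * v)]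

theorem statement_17 {A : Type*} [Fintype A] [DecidableEq A] [MeasurableSpace A] [MeasurableSingletonClass A]
    (hA : 2 ≤ Fintype.card A)
    (θ : ℝ) (hθ : θ ∈ Set.Ioo (0 : ℝ) 1)
    (φ : (ℕ → A) → ℝ) (hφ : LipFun θ φ)
    (μ : Measure (ℕ → A)) [IsProbabilityMeasure μ]
    (hσ : MeasurePreserving (shift (A := A)) μ μ)
    (hGibbs : IsGibbs φ μ) :
    ∃ lam₂ : ℝ, 0 < lam₂ ∧ ∀ (n : ℕ) (w : Fin n → A) (v : ℝ), 0 < v → v ≤ 1 / 2 →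
      μ {y | wordHitTime w y * μ (cylinder w) < ENNReal.ofReal v} ≤
          ENNReal.ofReal (1 - Real.exp (-lam₂ * v)) ∧
        1 - Real.exp (-lam₂ * v) ≤ lam₂ * v :=
  statement_17_general φ μ hσ hGibbs
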